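/- For any infinite cardinals λ ≥ μ with μ regular, there is a function F : λ × λ → μ such that for any S ⊆ λ of cardinality μ, there exists α ∈ λ with {F(α,β) : β ∈ S} of cardinality μ. -/

import Mathlib

/-!
Let `δ` be least such that `S ∩ δ` has size `μ` (possibly `δ = λ`). By minimality and the
regularity of `μ`, `S ∩ δ` is cofinal in `δ` and `cf δ = μ`. For every `δ` of cofinality `μ` fix
a map `g_δ : δ → μ` tending to infinity; it sends the cofinal set `S ∩ δ` onto an unbounded, hence
size-`μ`, subset of `μ`. The colouring `F(α, β) = g_α(β)` for `β < α`, and `g_λ(β)` otherwise, then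
works with `α = δ` when `δ < λ`, and with any `α ∈ S` when `δ = λ`.
-/

open Cardinal Order Set Filter

universe u

theorem Cardinal.IsRegular.nonempty_of_mk_eq {α : Type u} {κ : Cardinal.{u}} (hκ : κ.IsRegular)
    {s : Set α} (hs : #s = κ) : s.Nonempty := by
  rw [← nonempty_coe_sort, ← mk_ne_zero_iff, hs]
  exact hκ.pos.ne'

section Cofinality

variable {β : Type u} [LinearOrder β]

theorem exists_forall_lt_of_mk_lt_cof {s : Set β} (h : #s < cof β) : ∃ b, ∀ x ∈ s, x < b :=
  not_isCofinal_iff.1 fun hs => (cof_le hs).not_gt h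

theorem cof_le_mk_image_of_tendsto [Nonempty β] {γ : Type u} [Preorder γ] {g : β → γ}
    (hg : Tendsto g atTop atTop) {U : Set β} (hU : IsCofinal U) : cof γ ≤ #(g '' U) := by
  refine cof_le fun ξ => ?_
  obtain ⟨b, hb⟩ := eventually_atTop.1 (tendsto_atTop.1 hg ξ)
  obtain ⟨y, hyU, hby⟩ := hU b
  exact ⟨g y, mem_image_of_mem g hyU, hb y hby⟩

theorem exists_tendsto_atTop_toType_ord {κ : Cardinal.{u}} (h : cof β = κ) :
    ∃ g : β → κ.ord.ToType, Tendsto g atTop atTop := by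
  obtain ⟨C, hC, hCκ⟩ := exists_cof_eq β
  obtain ⟨e⟩ : Nonempty (κ.ord.ToType ≃ C) := Cardinal.eq.1 (by rw [mk_ord_toType, hCκ, h])
  have hne (y : β) : {ξ | y ≤ (e ξ : β)}.Nonempty := by
    obtain ⟨c, hc, hyc⟩ := hC y
    exact ⟨e.symm ⟨c, hc⟩, by simpa using hyc⟩
  -- `g y` is the first index enumerating a point of `C` above `y`; an initial segment of the
  -- indices has size `< κ = cof β`, so the points it enumerates are bounded in `β`.
  refine ⟨fun y => wellFounded_lt.min _ (hne y), tendsto_atTop.2 fun ξ => ?_⟩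
  obtain ⟨b, hb⟩ := exists_forall_lt_of_mk_lt_cof (s := (fun η => (e η : β)) '' Iio ξ) <| by
    rw [h]
    exact mk_image_le.trans_lt (by simpa using mk_Iio_lt ξ)
  filter_upwards [eventually_ge_atTop b] with y hby
  by_contra! hlt
  exact (hb _ ⟨_, hlt, rfl⟩).not_ge (hby.trans (wellFounded_lt.min_mem _ (hne y)))

variable {κ : Cardinal.{u}} {S : Set β}

theorem isCofinal_of_mk_inter_Iio_lt (hS : #S = κ) (h : ∀ c, #↥(S ∩ Iio c) < κ) :
    IsCofinal S := by
  by_contra hS'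
  obtain ⟨c, hc⟩ := not_isCofinal_iff.1 hS'
  have hSc : S ∩ Iio c = S := inter_eq_left.2 hc
  exact (h c).ne (by rw [hSc, hS])

theorem mk_inter_Iic_lt (hκ : ℵ₀ ≤ κ) {c : β} (h : #↥(S ∩ Iio c) < κ) : #↥(S ∩ Iic c) < κ := by
  have hsub : S ∩ Iic c ⊆ insert c (S ∩ Iio c) := fun x ⟨hxS, hxc⟩ =>
    hxc.eq_or_lt.imp id fun hlt => ⟨hxS, hlt⟩
  exact (mk_le_mk_of_subset hsub).trans_lt <|
    mk_insert_le.trans_lt (add_lt_of_lt hκ h (one_lt_aleph0.trans_le hκ))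

theorem cof_eq_of_mk_inter_Iio_lt (hκ : κ.IsRegular) (hS : #S = κ)
    (h : ∀ c, #↥(S ∩ Iio c) < κ) : cof β = κ := by
  refine (cof_le (isCofinal_of_mk_inter_Iio_lt hS h) |>.trans_eq hS).antisymm
    (not_lt.1 fun hlt => ?_)
  obtain ⟨C, hC, hCcof⟩ := exists_cof_eq β
  have hcover : S ⊆ ⋃ c ∈ C, S ∩ Iic c := fun x hx => by
    obtain ⟨c, hc, hxc⟩ := hC x
    exact mem_biUnion hc ⟨hx, hxc⟩
  have hunion := (card_biUnion_lt_iff_forall_of_isRegular hκ (hCcof.trans_lt hlt)).2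
    fun c _ => mk_inter_Iic_lt hκ.aleph0_le (h c)
  exact ((mk_le_mk_of_subset hcover).trans_lt hunion).ne hS

end Cofinality

noncomputable def cofinalIndex (β γ : Type*) [Preorder β] [Preorder γ] [Nonempty γ] : β → γ :=
  Classical.epsilon fun g => Tendsto g atTop atTop

theorem le_mk_image_cofinalIndex {β : Type u} [LinearOrder β] [Nonempty β] {κ : Cardinal.{u}}
    [Nonempty κ.ord.ToType] (hκ : κ.IsRegular) (hβ : cof β = κ) {U : Set β}
    (hU : IsCofinal U) : κ ≤ #(cofinalIndex β κ.ord.ToType '' U) := by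
  have hg : Tendsto (cofinalIndex β κ.ord.ToType) atTop atTop :=
    Classical.epsilon_spec (exists_tendsto_atTop_toType_ord hβ)
  simpa [Ordinal.cof_toType, hκ.cof_ord] using cof_le_mk_image_of_tendsto hg hU

noncomputable def cofinalColoring (α γ : Type*) [LinearOrder α] [Preorder γ] [Nonempty γ]
    (a b : α) : γ :=
  if h : b < a then cofinalIndex (Iio a) γ ⟨b, h⟩ else cofinalIndex α γ b

section Coloring

variable {α : Type u} [LinearOrder α] {κ : Cardinal.{u}} [Nonempty κ.ord.ToType] {S : Set α}

theorem le_mk_image_cofinalColoring_of_minimal (hκ : κ.IsRegular) {a : α}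
    (ha : #↥(S ∩ Iio a) = κ) (hmin : ∀ c < a, #↥(S ∩ Iio c) < κ) :
    κ ≤ #(cofinalColoring α κ.ord.ToType a '' S) := by
  set S' : Set (Iio a) := Subtype.val ⁻¹' S
  have hS' : #S' = κ := by
    have hS'_eq : S' = Subtype.val ⁻¹' (S ∩ Iio a) := by
      ext x
      simp [S']
    rw [hS'_eq, mk_preimage_of_injective_of_subset_range _ _ Subtype.val_injective
      (inter_subset_right.trans Subtype.range_coe.superset), ha]
  have hS'_Iio (c : Iio a) : #↥(S' ∩ Iio c) < κ :=
    (mk_preimage_of_injective _ (S ∩ Iio c.1) Subtype.val_injective).trans_lt (hmin c c.2)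
  obtain ⟨x, -⟩ := hκ.nonempty_of_mk_eq hS'
  have : Nonempty (Iio a) := ⟨x⟩
  refine (le_mk_image_cofinalIndex hκ (cof_eq_of_mk_inter_Iio_lt hκ hS' hS'_Iio)
    (isCofinal_of_mk_inter_Iio_lt hS' hS'_Iio)).trans (mk_le_mk_of_subset ?_)
  rintro _ ⟨x, hx, rfl⟩
  exact ⟨x.1, hx, dif_pos x.2⟩

theorem exists_le_mk_image_cofinalColoring_of_forall_mk_inter_Iio_lt (hκ : κ.IsRegular)
    (hS : #S = κ) (h : ∀ c, #↥(S ∩ Iio c) < κ) :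
    ∃ a, κ ≤ #(cofinalColoring α κ.ord.ToType a '' S) := by
  obtain ⟨a, haS⟩ := hκ.nonempty_of_mk_eq hS
  have hcof := isCofinal_of_mk_inter_Iio_lt hS h
  have hcof_Ici : IsCofinal (S ∩ Ici a) := fun x => by
    obtain ⟨y, hyS, hy⟩ := hcof (max x a)
    exact ⟨y, ⟨hyS, le_of_max_le_right hy⟩, le_of_max_le_left hy⟩
  have : Nonempty α := ⟨a⟩
  refine ⟨a, (le_mk_image_cofinalIndex hκ (cof_eq_of_mk_inter_Iio_lt hκ hS h) hcof_Ici).trans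
    (mk_le_mk_of_subset ?_)⟩
  rintro _ ⟨x, hx, rfl⟩
  exact ⟨x, hx.1, dif_neg (not_lt.2 hx.2)⟩

theorem exists_mk_image_cofinalColoring_eq [WellFoundedLT α] (hκ : κ.IsRegular) (hS : #S = κ) :
    ∃ a, #(cofinalColoring α κ.ord.ToType a '' S) = κ := by
  suffices ∃ a, κ ≤ #(cofinalColoring α κ.ord.ToType a '' S) from
    this.imp fun a ha => (mk_image_le.trans_eq hS).antisymm ha
  by_cases hbdd : ∃ a, κ ≤ #↥(S ∩ Iio a)
  · obtain ⟨a, ha, hmin⟩ := wellFounded_lt.has_min _ hbdd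
    refine ⟨a, le_mk_image_cofinalColoring_of_minimal hκ
      ((mk_le_mk_of_subset inter_subset_left).trans_eq hS |>.antisymm ha) fun c hc => ?_⟩
    exact not_le.1 fun hc' => hmin c hc' hc
  · push Not at hbdd
    exact exists_le_mk_image_cofinalColoring_of_forall_mk_inter_Iio_lt hκ hS hbdd

end Coloring

theorem stmt15 (l m : Cardinal.{u}) (hreg : m.IsRegular) :
    ∃ F : (Cardinal.ord l).ToType → (Cardinal.ord l).ToType → (Cardinal.ord m).ToType,
      ∀ S : Set (Cardinal.ord l).ToType, Cardinal.mk ↥S = m →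
        ∃ a : (Cardinal.ord l).ToType, Cardinal.mk ↥(F a '' S) = m := by
  have : Nonempty m.ord.ToType := Ordinal.nonempty_toType_iff.2 hreg.ord_pos.ne'
  exact ⟨cofinalColoring _ _, fun S hS => exists_mk_image_cofinalColoring_eq hreg hS⟩
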